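/- Let n ≥ 1 and let Ω ⊆ ℝⁿ be a nonempty bounded open set which has the ε-cone property for some ε ∈ (0, π/2]. Then there exist constants c₀ > 0 and ρ > 0 such that V_Ω(x,r) ≥ c₀ rⁿ for every x ∈ Ω and every r with 0 < r ≤ ρ. -/

import Mathlib

/-!
Fix `x ∈ Ω` and `0 < r ≤ ε`. If `B(x, r/2) ⊆ Ω`, the ball `B(x, kr)` with `k = (1 - cos ε)/4`
lies in `Ω ∩ B(x,r)`. Otherwise `B(x, r/2)`, being connected and meeting both `closure Ω` and
`Ωᶜ`, contains a boundary point `p`; then `x ∈ closure Ω ∩ B(p, ε)`, so the cone `𝒞(x, ξ_p, ε)`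
lies in `Ω`, and this cone contains the ball `B(x + (r/2)ξ_p, kr)`, which also lies in `B(x,r)`.
In both cases `V_Ω(x,r)` is at least the volume `kⁿ |B₁| rⁿ` of a ball of radius `kr`.
-/

open MeasureTheory Metric Set

noncomputable section

/-- The open truncated cone with vertex `y`, direction `ξ`, aperture `ε` and length `r`:
`{z : (z−y)·ξ ≥ cos(ε)|z−y| and 0 < |z−y| < r}`. -/
def coneSet (n : ℕ) (y ξ : EuclideanSpace ℝ (Fin n)) (ε r : ℝ) :
    Set (EuclideanSpace ℝ (Fin n)) :=
  {z | Real.cos ε * ‖z - y‖ ≤ (inner ℝ (z - y) ξ : ℝ) ∧ 0 < ‖z - y‖ ∧ ‖z - y‖ < r}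

/-- `Ω` has the `ε`-cone property: for every boundary point `x` there is a unit direction
`ξ` such that for every `y ∈ closure Ω ∩ B(x,ε)` the cone `𝒞(y,ξ,ε)` is contained in `Ω`. -/
def HasConeProperty (n : ℕ) (Ω : Set (EuclideanSpace ℝ (Fin n))) (ε : ℝ) : Prop :=
  ∀ x ∈ frontier Ω, ∃ ξ : EuclideanSpace ℝ (Fin n), ‖ξ‖ = 1 ∧
    ∀ y ∈ closure Ω ∩ ball x ε, coneSet n y ξ ε ε ⊆ Ω

theorem IsPreconnected.inter_frontier_nonempty {X : Type*} [TopologicalSpace X] {s t : Set X}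
    (hs : IsPreconnected s) (hst : (s ∩ closure t).Nonempty) (hnot : ¬s ⊆ t) :
    (s ∩ frontier t).Nonempty := by
  by_contra hempty
  have hcover : s ⊆ interior t ∪ (closure t)ᶜ := fun z hz => by
    by_cases hzt : z ∈ interior t
    · exact Or.inl hzt
    · exact Or.inr fun hzc => hempty ⟨z, hz, hzc, hzt⟩
  have hdisj : Disjoint (interior t) (closure t)ᶜ :=
    disjoint_compl_right.mono_left interior_subset_closure
  rcases hs.subset_or_subset isOpen_interior isClosed_closure.isOpen_compl hdisj hcover with
    hint | hext
  · exact hnot (hint.trans interior_subset)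
  · obtain ⟨z, hzs, hzc⟩ := hst
    exact hext hzs hzc

section InnerProductSpace

variable {E : Type*} [NormedAddCommGroup E] [InnerProductSpace ℝ E]

theorem sub_lt_inner_of_mem_ball_add_smul {x z ξ : E} (hξ : ‖ξ‖ = 1) {t s : ℝ}
    (hz : z ∈ ball (x + t • ξ) s) : t - s < inner ℝ (z - x) ξ := by
  have hw : |inner ℝ (z - (x + t • ξ)) ξ| < s := by
    calc |inner ℝ (z - (x + t • ξ)) ξ| ≤ ‖z - (x + t • ξ)‖ * ‖ξ‖ := abs_real_inner_le_norm _ _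
      _ < s := by rwa [hξ, mul_one, ← dist_eq_norm]
  have hsplit : inner ℝ (z - x) ξ = inner ℝ (z - (x + t • ξ)) ξ + t := by
    rw [show z - x = z - (x + t • ξ) + t • ξ by abel, inner_add_left, real_inner_smul_left,
      real_inner_self_eq_norm_sq, hξ]
    ring
  linarith [neg_abs_le (inner ℝ (z - (x + t • ξ)) ξ)]

theorem norm_sub_lt_of_mem_ball_add_smul {x z ξ : E} (hξ : ‖ξ‖ = 1) {t s : ℝ} (ht : 0 ≤ t)
    (hz : z ∈ ball (x + t • ξ) s) : ‖z - x‖ < t + s := by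
  calc ‖z - x‖ = ‖z - (x + t • ξ) + t • ξ‖ := by congr 1; abel
    _ ≤ ‖z - (x + t • ξ)‖ + ‖t • ξ‖ := norm_add_le _ _
    _ < s + t := by
      rw [norm_smul, hξ, mul_one, Real.norm_of_nonneg ht, ← dist_eq_norm]
      exact add_lt_add_of_lt_of_le hz le_rfl
    _ = t + s := add_comm s t

end InnerProductSpace

theorem coneSet_mono {n : ℕ} {y ξ : EuclideanSpace ℝ (Fin n)} {ε r r' : ℝ} (h : r ≤ r') :
    coneSet n y ξ ε r ⊆ coneSet n y ξ ε r' :=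
  fun _ ⟨hcos, hpos, hlt⟩ => ⟨hcos, hpos, hlt.trans_le h⟩

theorem coneSet_subset_ball {n : ℕ} {y ξ : EuclideanSpace ℝ (Fin n)} {ε r : ℝ} :
    coneSet n y ξ ε r ⊆ ball y r :=
  fun _ ⟨_, _, hlt⟩ => mem_ball_iff_norm.mpr hlt

theorem ball_subset_coneSet {n : ℕ} {x ξ : EuclideanSpace ℝ (Fin n)} (hξ : ‖ξ‖ = 1) {ε r : ℝ}
    (hcos : 0 ≤ Real.cos ε) (hr : 0 < r) :
    ball (x + (r / 2) • ξ) ((1 - Real.cos ε) / 4 * r) ⊆ coneSet n x ξ ε r := by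
  intro z hz
  have hinner := sub_lt_inner_of_mem_ball_add_smul hξ hz
  have hnorm := norm_sub_lt_of_mem_ball_add_smul hξ (by positivity) hz
  have hinner_le : inner ℝ (z - x) ξ ≤ ‖z - x‖ := by
    simpa [hξ] using real_inner_le_norm (z - x) ξ
  have hcos_le : Real.cos ε ≤ 1 := Real.cos_le_one ε
  refine ⟨?_, by nlinarith, by nlinarith⟩
  calc Real.cos ε * ‖z - x‖ ≤ Real.cos ε * (r / 2 + (1 - Real.cos ε) / 4 * r) := by gcongr
    _ ≤ r / 2 - (1 - Real.cos ε) / 4 * r := by nlinarith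
    _ ≤ inner ℝ (z - x) ξ := hinner.le

theorem HasConeProperty.exists_ball_subset_inter_ball {n : ℕ}
    {Ω : Set (EuclideanSpace ℝ (Fin n))} {ε : ℝ} (hcone : HasConeProperty n Ω ε)
    (hcos : 0 ≤ Real.cos ε)
    {x : EuclideanSpace ℝ (Fin n)} (hx : x ∈ closure Ω) {r : ℝ} (hr : 0 < r) (hrε : r ≤ ε) :
    ∃ c, ball c ((1 - Real.cos ε) / 4 * r) ⊆ Ω ∩ ball x r := by
  have hrad : (1 - Real.cos ε) / 4 * r ≤ r / 2 := by nlinarith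
  by_cases hinside : ball x (r / 2) ⊆ Ω
  · refine ⟨x, fun z hz => ?_⟩
    have hz' : z ∈ ball x (r / 2) := ball_subset_ball hrad hz
    exact ⟨hinside hz', ball_subset_ball (by linarith) hz'⟩
  obtain ⟨p, hpx, hp⟩ := (convex_ball x (r / 2)).isPreconnected.inter_frontier_nonempty
    ⟨x, mem_ball_self (by positivity), hx⟩ hinside
  obtain ⟨ξ, hξ, hconeΩ⟩ := hcone p hp
  have hxp : x ∈ ball p ε := mem_ball_comm.mp (ball_subset_ball (by linarith) hpx)
  refine ⟨x + (r / 2) • ξ, fun z hz => ?_⟩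
  have hzcone := ball_subset_coneSet hξ hcos hr hz
  exact ⟨hconeΩ x ⟨hx, hxp⟩ (coneSet_mono hrε hzcone), coneSet_subset_ball hzcone⟩

section AddHaar

variable {E : Type*} [NormedAddCommGroup E] [NormedSpace ℝ E] [MeasurableSpace E] [BorelSpace E]
  [FiniteDimensional ℝ E] (μ : Measure E) [μ.IsAddHaarMeasure]

theorem ofReal_le_addHaar_of_ball_subset {k r : ℝ} (hk : 0 < k) (hr : 0 < r) {c : E} {S : Set E}
    (hS : ball c (k * r) ⊆ S) :
    ENNReal.ofReal (k ^ Module.finrank ℝ E * (μ (ball 0 1)).toReal * r ^ Module.finrank ℝ E)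
      ≤ μ S :=
  calc ENNReal.ofReal (k ^ Module.finrank ℝ E * (μ (ball 0 1)).toReal * r ^ Module.finrank ℝ E)
      = ENNReal.ofReal ((k * r) ^ Module.finrank ℝ E) * μ (ball 0 1) := by
        rw [mul_right_comm, ← mul_pow, ENNReal.ofReal_mul (by positivity),
          ENNReal.ofReal_toReal measure_ball_lt_top.ne]
    _ = μ (ball c (k * r)) := (Measure.addHaar_ball_of_pos μ c (by positivity)).symm
    _ ≤ μ S := measure_mono hS

end AddHaar

theorem volume_lower_bound_of_coneProperty_general (n : ℕ)
    (Ω : Set (EuclideanSpace ℝ (Fin n)))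
    (ε : ℝ) (hε : ε ∈ Set.Ioc 0 (Real.pi / 2))
    (hcone : HasConeProperty n Ω ε) :
    ∃ c₀ ρ : ℝ, 0 < c₀ ∧ 0 < ρ ∧ ∀ x ∈ Ω, ∀ r : ℝ, 0 < r → r ≤ ρ →
      ENNReal.ofReal (c₀ * r ^ n) ≤ volume (Ω ∩ ball x r) := by
  obtain ⟨hε0, hεπ⟩ := hε
  have hcos : 0 ≤ Real.cos ε := Real.cos_nonneg_of_mem_Icc ⟨by linarith [Real.pi_pos], hεπ⟩
  have hcos_lt : Real.cos ε < 1 := by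
    simpa using Real.cos_lt_cos_of_nonneg_of_le_pi le_rfl (by linarith [Real.pi_pos]) hε0
  have hk : 0 < (1 - Real.cos ε) / 4 := by linarith
  have hunit : 0 < (volume (ball (0 : EuclideanSpace ℝ (Fin n)) 1)).toReal :=
    ENNReal.toReal_pos (measure_ball_pos _ _ one_pos).ne' measure_ball_lt_top.ne
  refine ⟨((1 - Real.cos ε) / 4) ^ n * (volume (ball (0 : EuclideanSpace ℝ (Fin n)) 1)).toReal,
    ε, by positivity, hε0, fun x hx r hr hrε => ?_⟩
  obtain ⟨c, hc⟩ := hcone.exists_ball_subset_inter_ball hcos (subset_closure hx) hr hrε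
  simpa only [finrank_euclideanSpace_fin] using ofReal_le_addHaar_of_ball_subset volume hk hr hc

/-- For a nonempty bounded open set of `ℝⁿ` with the `ε`-cone property there are
`c₀ > 0` and `ρ > 0` such that `V_Ω(x,r) ≥ c₀ rⁿ` for all `x ∈ Ω` and `0 < r ≤ ρ`. -/
theorem volume_lower_bound_of_coneProperty (n : ℕ) (hn : 1 ≤ n)
    (Ω : Set (EuclideanSpace ℝ (Fin n))) (hne : Ω.Nonempty)
    (hbd : Bornology.IsBounded Ω) (hop : IsOpen Ω)
    (ε : ℝ) (hε : ε ∈ Set.Ioc 0 (Real.pi / 2))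
    (hcone : HasConeProperty n Ω ε) :
    ∃ c₀ ρ : ℝ, 0 < c₀ ∧ 0 < ρ ∧ ∀ x ∈ Ω, ∀ r : ℝ, 0 < r → r ≤ ρ →
      ENNReal.ofReal (c₀ * r ^ n) ≤ volume (Ω ∩ ball x r) :=
  volume_lower_bound_of_coneProperty_general n Ω ε hε hcone
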